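/- Let k ≥ 1 and let λ = (λ_1, λ_2, …, λ_{2k}) be a partition with exactly 2k parts, all parts odd and pairwise distinct (so λ_1 > λ_2 > ⋯ > λ_{2k} > 0). Define α = ((λ_1+1)/2, …, (λ_k+1)/2, (λ_{k+1}−1)/2, …, (λ_{2k}−1)/2) and β = ((λ_1−1)/2, …, (λ_k−1)/2, (λ_{k+1}+1)/2, …, (λ_{2k}+1)/2). Then the Littlewood–Richardson coefficient c^λ_{βα} (counting Littlewood–Richardson tableaux of shape λ/β and content α) is at least 1. -/

import Mathlib

/-!
Fill row `i` of the skew diagram `λ/β` entirely with the entry `i + 1`. Since `λ` has odd parts,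
row `i` has exactly `λ_i - β_i = α_i` cells, so the content is `α`; rows and columns are trivially
ordered. Every `i + 2` is read after every `i + 1`, so the lattice condition only asks that row
`i + 1` be no longer than row `i`, i.e. that `α` be weakly decreasing, which it is because `λ` is.
-/

/-- A partition: a weakly decreasing finite sequence (list) of positive
integers. -/
def IsPartition (l : List ℕ) : Prop :=
  l.Pairwise (· ≥ ·) ∧ ∀ x ∈ l, 0 < x

/-- The `i`-th part (0-indexed) of a partition, `0` beyond its length. -/
def part (l : List ℕ) (i : ℕ) : ℕ := l.getD i 0

/-- Cell `(i, j)` (row `i`, column `j`, both 0-indexed) lies in the skew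
Young diagram `ν/λ`. -/
def InSkew (nu lam : List ℕ) (i j : ℕ) : Prop :=
  part lam i ≤ j ∧ j < part nu i

/-- Cell `(i, j)` comes weakly before cell `(r, c)` in the reverse reading
order: rows are read top to bottom, and each row is read right to left. -/
def ReadingLE (i j r c : ℕ) : Prop := i < r ∨ (i = r ∧ c ≤ j)

/-- `T` is a Littlewood–Richardson tableau of shape `ν/λ` and content `μ`:
`λ ⊆ ν`, the entries of `T` are positive exactly on the cells of the skew
diagram `ν/λ`, entries weakly increase from left to right along rows,
entries strictly increase from top to bottom down columns, for every `j ≥ 1`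
the entry `j` occurs exactly `μ_j` times, and the reverse reading word is a
lattice word: every prefix contains at least as many occurrences of `j` as
of `j + 1`, for every `j ≥ 1`. -/
structure IsLRTableau (nu lam mu : List ℕ) (T : ℕ → ℕ → ℕ) : Prop where
  subset : ∀ i, part lam i ≤ part nu i
  support : ∀ i j, 0 < T i j ↔ InSkew nu lam i j
  row_weak : ∀ i j j', InSkew nu lam i j → InSkew nu lam i j' → j ≤ j' →
    T i j ≤ T i j'
  col_strict : ∀ i i' j, InSkew nu lam i j → InSkew nu lam i' j → i < i' →
    T i j < T i' j
  content : ∀ k : ℕ, {p : ℕ × ℕ | T p.1 p.2 = k + 1}.ncard = part mu k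
  lattice : ∀ r c k : ℕ,
    {p : ℕ × ℕ | T p.1 p.2 = k + 2 ∧ ReadingLE p.1 p.2 r c}.ncard ≤
    {p : ℕ × ℕ | T p.1 p.2 = k + 1 ∧ ReadingLE p.1 p.2 r c}.ncard

/-- The Littlewood–Richardson coefficient `c^ν_{λμ}`: the number of
Littlewood–Richardson tableaux of shape `ν/λ` and content `μ`. -/
noncomputable def lrCoeff (nu lam mu : List ℕ) : ℕ :=
  {T : ℕ → ℕ → ℕ | IsLRTableau nu lam mu T}.ncard

/-- The Newell–Littlewood coefficient
`N^ν_{λμ} = Σ_{α,β,γ} c^λ_{αβ} · c^μ_{αγ} · c^ν_{βγ}`, the sum running over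
all triples of partitions `(α, β, γ)` (only finitely many terms are
nonzero). -/
noncomputable def nlCoeff (lam mu nu : List ℕ) : ℕ :=
  ∑ᶠ x : {l : List ℕ // IsPartition l} × {l : List ℕ // IsPartition l} ×
      {l : List ℕ // IsPartition l},
    lrCoeff lam x.1.val x.2.1.val * lrCoeff mu x.1.val x.2.2.val *
      lrCoeff nu x.2.1.val x.2.2.val

/-- The partition `α = ((λ₁+1)/2, …, (λ_k+1)/2, (λ_{k+1}−1)/2, …, (λ_{2k}−1)/2)`
associated to a partition `λ` with `2k` parts. -/
def distAlpha (k : ℕ) (lam : List ℕ) : List ℕ :=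
  (List.range (2 * k)).map fun i =>
    if i < k then (part lam i + 1) / 2 else (part lam i - 1) / 2

/-- The partition `β = ((λ₁−1)/2, …, (λ_k−1)/2, (λ_{k+1}+1)/2, …, (λ_{2k}+1)/2)`
associated to a partition `λ` with `2k` parts. -/
def distBeta (k : ℕ) (lam : List ℕ) : List ℕ :=
  (List.range (2 * k)).map fun i =>
    if i < k then (part lam i - 1) / 2 else (part lam i + 1) / 2

section Part

lemma part_eq_getElem {l : List ℕ} {i : ℕ} (hi : i < l.length) : part l i = l[i] :=
  List.getD_eq_getElem _ _ hi

lemma part_mem {l : List ℕ} {i : ℕ} (hi : i < l.length) : part l i ∈ l := by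
  rw [part_eq_getElem hi]
  exact List.getElem_mem hi

lemma part_eq_zero_of_length_le {l : List ℕ} {i : ℕ} (hi : l.length ≤ i) : part l i = 0 := by
  rw [part, List.getD_eq_getElem?_getD, List.getElem?_eq_none hi, Option.getD_none]

lemma part_le_sum (l : List ℕ) (i : ℕ) : part l i ≤ l.sum := by
  rcases lt_or_ge i l.length with hi | hi
  · exact List.le_sum_of_mem (part_mem hi)
  · rw [part_eq_zero_of_length_le hi]
    exact Nat.zero_le _

lemma part_map_range (f : ℕ → ℕ) (n i : ℕ) :
    part ((List.range n).map f) i = if i < n then f i else 0 := by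
  split_ifs with h
  · rw [part_eq_getElem (by simpa using h)]
    simp
  · exact part_eq_zero_of_length_le (by simpa using h)

lemma antitone_part_of_pairwise {l : List ℕ} (hl : l.Pairwise (· ≥ ·)) : Antitone (part l) := by
  refine antitone_nat_of_succ_le fun i => ?_
  rcases lt_or_ge (i + 1) l.length with hi | hi
  · rw [part_eq_getElem hi, part_eq_getElem (by omega)]
    simpa using hl.rel_get_of_lt (a := ⟨i, by omega⟩) (b := ⟨i + 1, hi⟩) (by simp)
  · rw [part_eq_zero_of_length_le hi]
    exact Nat.zero_le _

end Part

section RowFilling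

instance (nu lam : List ℕ) (i j : ℕ) : Decidable (InSkew nu lam i j) :=
  inferInstanceAs (Decidable (_ ∧ _))

def rowFilling (nu lam : List ℕ) (i j : ℕ) : ℕ := if InSkew nu lam i j then i + 1 else 0

variable {nu lam mu : List ℕ}

lemma rowFilling_eq_succ_iff {i j v : ℕ} :
    rowFilling nu lam i j = v + 1 ↔ i = v ∧ InSkew nu lam v j := by
  unfold rowFilling
  split_ifs with h
  · constructor
    · intro hv
      obtain rfl : i = v := by omega
      exact ⟨rfl, h⟩
    · rintro ⟨rfl, -⟩
      rfl
  · exact iff_of_false not_false fun ⟨hiv, hv⟩ => h (hiv ▸ hv)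

lemma setOf_rowFilling_eq_succ (v : ℕ) :
    {p : ℕ × ℕ | rowFilling nu lam p.1 p.2 = v + 1} =
      Prod.mk v '' Set.Ico (part lam v) (part nu v) := by
  ext ⟨i, j⟩
  simp only [Set.mem_ofPred_eq, rowFilling_eq_succ_iff, InSkew, Set.mem_image, Set.mem_Ico,
    Prod.mk.injEq]
  constructor
  · rintro ⟨rfl, hj⟩
    exact ⟨j, hj, rfl, rfl⟩
  · rintro ⟨j, hj, rfl, rfl⟩
    exact ⟨rfl, hj⟩

lemma isLRTableau_rowFilling (hmu : ∀ i, part lam i + part mu i = part nu i)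
    (hanti : Antitone (part mu)) : IsLRTableau nu lam mu (rowFilling nu lam) where
  subset i := (hmu i) ▸ Nat.le_add_right _ _
  support i j := by
    unfold rowFilling
    split_ifs with h <;> simp [h]
  row_weak i j j' hj hj' _ := by
    simp only [rowFilling, if_pos hj, if_pos hj', le_refl]
  col_strict i i' j hi hi' hii' := by
    simp only [rowFilling, if_pos hi, if_pos hi']
    omega
  content v := by
    rw [setOf_rowFilling_eq_succ, Set.ncard_image_of_injective _ (Prod.mk_right_injective v),
      ← Finset.coe_Ico, Set.ncard_coe_finset, Nat.card_Ico, ← hmu v, Nat.add_sub_cancel_left]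
  lattice r c m := by
    -- shift row `m + 1` of the skew diagram onto row `m`, which is read entirely before it
    refine Set.ncard_le_ncard_of_injOn (fun p => (m, part lam m + (p.2 - part lam (m + 1))))
      ?_ ?_ ((setOf_rowFilling_eq_succ m ▸ (Set.finite_Ico _ _).image _).subset fun p hp => hp.1)
    · rintro ⟨i, j⟩ ⟨hT, hR⟩
      obtain ⟨rfl, hj⟩ := rowFilling_eq_succ_iff.mp hT
      have := hmu m
      have := hmu (m + 1)
      have := hanti (Nat.le_add_right m 1)
      refine ⟨rowFilling_eq_succ_iff.mpr ⟨rfl, ?_⟩, ?_⟩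
      · unfold InSkew at hj ⊢
        dsimp only
        omega
      · unfold ReadingLE at hR ⊢
        omega
    · rintro ⟨i, j⟩ ⟨hT, -⟩ ⟨i', j'⟩ ⟨hT', -⟩ heq
      obtain ⟨rfl, hj⟩ := rowFilling_eq_succ_iff.mp hT
      obtain ⟨rfl, hj'⟩ := rowFilling_eq_succ_iff.mp hT'
      have : j = j' := by
        have := congrArg Prod.snd heq
        unfold InSkew at hj hj'
        simp only at this
        omega
      rw [this]

end RowFilling

section Finiteness

lemma finite_setOf_inSkew (nu lam : List ℕ) : {p : ℕ × ℕ | InSkew nu lam p.1 p.2}.Finite := by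
  refine ((Set.finite_Iio nu.length).prod (Set.finite_Iio nu.sum)).subset ?_
  rintro ⟨i, j⟩ ⟨-, hj⟩
  have hi : i < nu.length := by
    by_contra! hi
    rw [part_eq_zero_of_length_le hi] at hj
    omega
  exact ⟨hi, hj.trans_le (part_le_sum nu i)⟩

lemma IsLRTableau.le_length {nu lam mu : List ℕ} {T : ℕ → ℕ → ℕ}
    (hT : IsLRTableau nu lam mu T) (i j : ℕ) : T i j ≤ mu.length := by
  by_contra! h
  have hfin : {p : ℕ × ℕ | T p.1 p.2 = T i j - 1 + 1}.Finite :=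
    (finite_setOf_inSkew nu lam).subset fun p hp => (hT.support p.1 p.2).mp (by simp_all)
  have hpos := (Set.ncard_pos hfin).mpr ⟨(i, j), by simp only [Set.mem_ofPred_eq]; omega⟩
  rw [hT.content, part_eq_zero_of_length_le (by omega)] at hpos
  exact hpos.false

/-- A tableau is determined by its entries on the finite skew diagram, which are bounded. -/
lemma finite_setOf_isLRTableau (nu lam mu : List ℕ) :
    {T : ℕ → ℕ → ℕ | IsLRTableau nu lam mu T}.Finite := by
  set S := {p : ℕ × ℕ | InSkew nu lam p.1 p.2}
  have : Finite S := (finite_setOf_inSkew nu lam).to_subtype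
  refine Set.Finite.of_finite_image (f := fun T (p : S) => T p.1.1 p.1.2)
    ((Set.Finite.pi fun _ => Set.finite_Iic mu.length).subset ?_) ?_
  · rintro _ ⟨T, hT, rfl⟩ p -
    exact hT.le_length _ _
  · intro T hT T' hT' heq
    funext i j
    by_cases hij : InSkew nu lam i j
    · exact congrFun heq ⟨(i, j), hij⟩
    · have h := mt (hT.support i j).mp hij
      have h' := mt (hT'.support i j).mp hij
      omega

lemma one_le_lrCoeff_of_isLRTableau {nu lam mu : List ℕ} {T : ℕ → ℕ → ℕ}
    (hT : IsLRTableau nu lam mu T) : 1 ≤ lrCoeff nu lam mu :=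
  (Set.ncard_pos (finite_setOf_isLRTableau nu lam mu)).mpr ⟨T, hT⟩

end Finiteness

section DistAlphaBeta

variable {k : ℕ} {lam : List ℕ}

lemma part_distBeta_add_part_distAlpha (hlen : lam.length = 2 * k) (hodd : ∀ x ∈ lam, Odd x)
    (i : ℕ) : part (distBeta k lam) i + part (distAlpha k lam) i = part lam i := by
  rw [distBeta, distAlpha, part_map_range, part_map_range]
  rcases lt_or_ge i (2 * k) with hi | hi
  · obtain ⟨t, ht⟩ := hodd _ (part_mem (l := lam) (i := i) (by omega))
    simp only [hi, if_true]
    split_ifs <;> omega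
  · simp only [show ¬i < 2 * k by omega, if_false,
      part_eq_zero_of_length_le (l := lam) (i := i) (by omega)]

lemma antitone_part_distAlpha (hanti : Antitone (part lam)) :
    Antitone (part (distAlpha k lam)) := by
  refine antitone_nat_of_succ_le fun i => ?_
  have := hanti (Nat.le_add_right i 1)
  rw [distAlpha, part_map_range, part_map_range]
  split_ifs <;> omega

end DistAlphaBeta

theorem one_le_lrCoeff_distBeta_distAlpha_general
    (k : ℕ) (lam : List ℕ)
    (hlen : lam.length = 2 * k)
    (hsort : lam.Pairwise (· > ·))
    (hodd : ∀ x ∈ lam, Odd x) :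
    1 ≤ lrCoeff lam (distBeta k lam) (distAlpha k lam) :=
  one_le_lrCoeff_of_isLRTableau <| isLRTableau_rowFilling
    (part_distBeta_add_part_distAlpha hlen hodd)
    (antitone_part_distAlpha (antitone_part_of_pairwise (hsort.imp le_of_lt)))

/-- For a partition `λ` with exactly `2k` parts, all odd and pairwise
distinct, one has `c^λ_{βα} ≥ 1` (tableaux of shape `λ/β` and content
`α`). -/
theorem one_le_lrCoeff_distBeta_distAlpha
    (k : ℕ) (hk : 1 ≤ k) (lam : List ℕ)
    (hlen : lam.length = 2 * k)
    (hsort : lam.Pairwise (· > ·))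
    (hodd : ∀ x ∈ lam, Odd x) :
    1 ≤ lrCoeff lam (distBeta k lam) (distAlpha k lam) :=
  one_le_lrCoeff_distBeta_distAlpha_general k lam hlen hsort hodd
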